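/- arXiv:2411.17393 — 2 statements merged into one kernel-verified Lean document; each statement's English description precedes it below -/
import Mathlib

section
/- With the setup of the Poisson parametric test (Y ~ Poisson((π₁+π₂)p) conditional on independent Poissons π₁, π₂ with means m₁U₁, m₂U₂, p = U₁/U, U = U₁+U₂, X₂ = Y − π₁), Var(X₂) = [m₁U₁(U₁U + U₂²) + m₂U₁U₂(2U₁+U₂)]/U². -/
/-!
Conditionally on `(π₁, π₂)`, the statistic `X₂ = Y - π₁` has mean `(p - 1) π₁ + p π₂` and
variance `(π₁ + π₂) p`. By the law of total variance,
`Var X₂ = E[(π₁ + π₂) p] + Var((p - 1) π₁ + p π₂) = (a + b) p + (p - 1)² a + p² b`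
with `a = m₁ U₁`, `b = m₂ U₂`, `p = U₁ / U`, which is the claimed formula.

Since `π₁, π₂, Y` need not be measurable, expectations are computed as sums over the
countable partition of `Ω` by the values of `(π₁, π₂, Y)`: its cells have masses adding up to
`1`, which forces them to be null-measurable.
-/

open MeasureTheory ProbabilityTheory

noncomputable def poissonWeight (x : ℝ) (k : ℕ) : ℝ := Real.exp (-x) * x ^ k / k.factorial

lemma poissonWeight_nonneg {x : ℝ} (hx : 0 ≤ x) (k : ℕ) : 0 ≤ poissonWeight x k := by
  unfold poissonWeight; positivity

lemma hasSum_poissonWeight (x : ℝ) : HasSum (poissonWeight x) 1 := by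
  have h := (NormedSpace.expSeries_div_hasSum_exp x).mul_left (Real.exp (-x))
  rw [← congrFun Real.exp_eq_exp_ℝ x, ← Real.exp_add, neg_add_cancel, Real.exp_zero] at h
  exact h.congr_fun fun k => mul_div_assoc _ _ _

lemma succ_mul_poissonWeight_succ (x : ℝ) (k : ℕ) :
    ((k : ℝ) + 1) * poissonWeight x (k + 1) = x * poissonWeight x k := by
  simp only [poissonWeight, Nat.factorial_succ, pow_succ, Nat.cast_mul, Nat.cast_succ]
  field_simp

lemma hasSum_natCast_mul_poissonWeight (x : ℝ) :
    HasSum (fun k : ℕ => (k : ℝ) * poissonWeight x k) x := by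
  rw [← hasSum_nat_add_iff' 1]
  simpa [succ_mul_poissonWeight_succ] using (hasSum_poissonWeight x).mul_left x

lemma hasSum_sq_mul_poissonWeight (x : ℝ) :
    HasSum (fun k : ℕ => (k : ℝ) ^ 2 * poissonWeight x k) (x + x ^ 2) := by
  rw [← hasSum_nat_add_iff' 1, Finset.sum_range_one, Nat.cast_zero, zero_pow two_ne_zero,
    zero_mul, sub_zero, show x + x ^ 2 = x * (x + 1) by ring]
  refine (((hasSum_natCast_mul_poissonWeight x).add (hasSum_poissonWeight x)).mul_left x).congr_fun
    fun k => ?_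
  push_cast
  linear_combination ((k : ℝ) + 1) * succ_mul_poissonWeight_succ x k

lemma hasSum_quadratic_mul_poissonWeight (x α β γ : ℝ) :
    HasSum (fun k : ℕ => (α * (k : ℝ) ^ 2 + β * k + γ) * poissonWeight x k)
      (α * (x + x ^ 2) + β * x + γ) := by
  have h := (((hasSum_sq_mul_poissonWeight x).mul_left α).add
    ((hasSum_natCast_mul_poissonWeight x).mul_left β)).add ((hasSum_poissonWeight x).mul_left γ)
  rw [mul_one] at h
  exact h.congr_fun fun k => by ring

lemma Summable.hasSum_of_hasSum_fiberwise {β γ α : Type*} [AddCommMonoid α] [TopologicalSpace α]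
    [ContinuousAdd α] [T3Space α] {f : β × γ → α} (hf : Summable f) {g : β → α} {a : α}
    (hg : ∀ b, HasSum (fun c => f (b, c)) (g b)) (ha : HasSum g a) : HasSum f a :=
  ha.unique (hf.hasSum.prod_fiberwise hg) ▸ hf.hasSum

lemma hasSum_prod_of_nonneg {β γ : Type*} {f : β × γ → ℝ} (hf : 0 ≤ f) {g : β → ℝ} {a : ℝ}
    (hg : ∀ b, HasSum (fun c => f (b, c)) (g b)) (ha : HasSum g a) : HasSum f a := by
  refine Summable.hasSum_of_hasSum_fiberwise ?_ hg ha
  refine (summable_prod_of_nonneg hf).2 ⟨fun b => (hg b).summable, ?_⟩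
  simpa only [(hg _).tsum_eq] using ha.summable

lemma nullMeasurableSet_of_measure_add_measure_compl_le {Ω : Type*} [MeasurableSpace Ω]
    {μ : Measure Ω} [IsFiniteMeasure μ] {s : Set Ω} (h : μ s + μ sᶜ ≤ μ Set.univ) :
    NullMeasurableSet s μ := by
  obtain ⟨t, hst, ht, hμt⟩ := exists_measurable_superset μ s
  have hcompl : μ sᶜ = μ (t \ s) + μ tᶜ := by
    rw [← measure_inter_add_sdiff sᶜ ht, Set.sdiff_eq, Set.inter_comm, ← Set.sdiff_eq,
      Set.inter_eq_right.2 (Set.compl_subset_compl.2 hst)]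
  have hle : μ (t \ s) + (μ s + μ tᶜ) ≤ 0 + (μ s + μ tᶜ) :=
    calc μ (t \ s) + (μ s + μ tᶜ) = μ s + μ sᶜ := by rw [hcompl]; ring
      _ ≤ μ Set.univ := h
      _ = 0 + (μ s + μ tᶜ) := by rw [zero_add, ← hμt, measure_add_measure_compl ht]
  have hnull : μ (t \ s) = 0 :=
    nonpos_iff_eq_zero.1 (ENNReal.le_of_add_le_add_right (by finiteness) hle)
  refine ht.nullMeasurableSet.congr (ae_eq_set.2 ⟨hnull, ?_⟩)
  rw [Set.sdiff_eq_empty.2 hst, measure_empty]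

lemma hasSum_integral_of_partition {Ω ι : Type*} [MeasurableSpace Ω] [Countable ι]
    {μ : Measure Ω} [IsFiniteMeasure μ] {A : ι → Set Ω}
    (hdisj : Pairwise (Function.onFun Disjoint A)) (hcov : ⋃ i, A i = Set.univ)
    (hsum : ∑' i, μ (A i) = μ Set.univ) {f : Ω → ℝ} {c : ι → ℝ}
    (hfc : ∀ i, ∀ ω ∈ A i, f ω = c i) (hf : Integrable f μ) :
    HasSum (fun i => c i * μ.real (A i)) (∫ ω, f ω ∂μ) := by
  classical
  have hnm : ∀ i, NullMeasurableSet (A i) μ := by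
    intro i
    refine nullMeasurableSet_of_measure_add_measure_compl_le ?_
    have hsub : (A i)ᶜ ⊆ ⋃ j, if j = i then ∅ else A j := by
      intro ω hω
      obtain ⟨j, hj⟩ := Set.mem_iUnion.1 (hcov ▸ Set.mem_univ ω)
      exact Set.mem_iUnion.2 ⟨j, by rwa [if_neg (by rintro rfl; exact hω hj)]⟩
    have hcompl : μ (A i)ᶜ ≤ ∑' j, if j = i then 0 else μ (A j) :=
      calc μ (A i)ᶜ ≤ ∑' j, μ (if j = i then ∅ else A j) :=
            (measure_mono hsub).trans (measure_iUnion_le _)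
        _ = ∑' j, if j = i then 0 else μ (A j) :=
            tsum_congr fun j => by split_ifs <;> simp
    calc μ (A i) + μ (A i)ᶜ ≤ μ (A i) + ∑' j, if j = i then 0 else μ (A j) := by gcongr
      _ = μ Set.univ := (ENNReal.tsum_eq_add_tsum_ite i).symm.trans hsum
  have H := hasSum_integral_iUnion_ae hnm (fun i j hij => (hdisj hij).aedisjoint)
    (by rw [hcov]; exact hf.integrableOn)
  rw [hcov, setIntegral_univ] at H
  refine H.congr_fun fun i => ?_
  rw [setIntegral_congr_ae₀ (hnm i) (Filter.Eventually.of_forall (hfc i)), setIntegral_const,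
    smul_eq_mul, mul_comm]

/-- `P(π₁ = n₁, π₂ = n₂, Y = k)` in the Poisson test model, at `i = (n₁, n₂, k)`. -/
noncomputable def mixtureWeight (a b p : ℝ) (i : ℕ × ℕ × ℕ) : ℝ :=
  poissonWeight a i.1 * poissonWeight b i.2.1 * poissonWeight (((i.1 + i.2.1 : ℕ) : ℝ) * p) i.2.2

section Mixture

variable {a b p : ℝ}

lemma mixtureWeight_nonneg (ha : 0 ≤ a) (hb : 0 ≤ b) (hp : 0 ≤ p) (i : ℕ × ℕ × ℕ) :
    0 ≤ mixtureWeight a b p i :=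
  mul_nonneg (mul_nonneg (poissonWeight_nonneg ha _) (poissonWeight_nonneg hb _))
    (poissonWeight_nonneg (by positivity) _)

lemma hasSum_mixtureWeight (ha : 0 ≤ a) (hb : 0 ≤ b) (hp : 0 ≤ p) :
    HasSum (mixtureWeight a b p) 1 := by
  have hw := mixtureWeight_nonneg ha hb hp
  refine hasSum_prod_of_nonneg hw (fun n₁ => ?_) (hasSum_poissonWeight a)
  have hb₁ := (hasSum_poissonWeight b).mul_left (poissonWeight a n₁)
  rw [mul_one] at hb₁
  refine hasSum_prod_of_nonneg (fun _ => hw _) (fun n₂ => ?_) hb₁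
  have hk := (hasSum_poissonWeight (((n₁ + n₂ : ℕ) : ℝ) * p)).mul_left
    (poissonWeight a n₁ * poissonWeight b n₂)
  rwa [mul_one] at hk

lemma hasSum_mul_mixtureWeight {f : ℕ × ℕ × ℕ → ℝ}
    (hf : Summable fun i => f i * mixtureWeight a b p i) (g : ℕ → ℕ → ℝ) (h : ℕ → ℝ) {s : ℝ}
    (hg : ∀ n₁ n₂, HasSum (fun k => f (n₁, n₂, k) * poissonWeight (((n₁ + n₂ : ℕ) : ℝ) * p) k)
      (g n₁ n₂))
    (hh : ∀ n₁, HasSum (fun n₂ => g n₁ n₂ * poissonWeight b n₂) (h n₁))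
    (hs : HasSum (fun n₁ => h n₁ * poissonWeight a n₁) s) :
    HasSum (fun i => f i * mixtureWeight a b p i) s := by
  refine hf.hasSum_of_hasSum_fiberwise (fun n₁ => ?_) hs
  refine (hf.prod_factor n₁).hasSum_of_hasSum_fiberwise
    (g := fun n₂ => g n₁ n₂ * (poissonWeight a n₁ * poissonWeight b n₂)) (fun n₂ => ?_)
    (((hh n₁).mul_right (poissonWeight a n₁)).congr_fun fun n₂ => by ring)
  exact ((hg n₁ n₂).mul_right _).congr_fun fun k => by rw [mixtureWeight]; ring

lemma hasSum_sub_mul_mixtureWeight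
    (hf : Summable fun i : ℕ × ℕ × ℕ => ((i.2.2 : ℝ) - i.1) * mixtureWeight a b p i) :
    HasSum (fun i : ℕ × ℕ × ℕ => ((i.2.2 : ℝ) - i.1) * mixtureWeight a b p i)
      ((p - 1) * a + p * b) := by
  refine hasSum_mul_mixtureWeight hf (fun n₁ n₂ => (p - 1) * n₁ + p * n₂)
    (fun n₁ => (p - 1) * n₁ + p * b) (fun n₁ n₂ => ?_) (fun n₁ => ?_) ?_
  · convert hasSum_quadratic_mul_poissonWeight (((n₁ + n₂ : ℕ) : ℝ) * p) 0 1 (-n₁) using 1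
    · funext k; ring
    · push_cast; ring
  · convert hasSum_quadratic_mul_poissonWeight b 0 p ((p - 1) * n₁) using 1
    · funext n₂; ring
    · ring
  · convert hasSum_quadratic_mul_poissonWeight a 0 (p - 1) (p * b) using 1
    · funext n₁; ring
    · ring

lemma hasSum_sub_sq_mul_mixtureWeight
    (hf : Summable fun i : ℕ × ℕ × ℕ => ((i.2.2 : ℝ) - i.1) ^ 2 * mixtureWeight a b p i) :
    HasSum (fun i : ℕ × ℕ × ℕ => ((i.2.2 : ℝ) - i.1) ^ 2 * mixtureWeight a b p i)
      ((a + b) * p + ((p - 1) ^ 2 * a + p ^ 2 * b) + ((p - 1) * a + p * b) ^ 2) := by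
  refine hasSum_mul_mixtureWeight hf (fun n₁ n₂ => (n₁ + n₂) * p + ((p - 1) * n₁ + p * n₂) ^ 2)
    (fun n₁ => (n₁ + b) * p + p ^ 2 * b + ((p - 1) * n₁ + p * b) ^ 2)
    (fun n₁ n₂ => ?_) (fun n₁ => ?_) ?_
  · convert hasSum_quadratic_mul_poissonWeight (((n₁ + n₂ : ℕ) : ℝ) * p) 1 (-2 * n₁) (n₁ ^ 2)
      using 1
    · funext k; ring
    · push_cast; ring
  · convert hasSum_quadratic_mul_poissonWeight b (p ^ 2) (p + 2 * p * (p - 1) * n₁)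
      (n₁ * p + (p - 1) ^ 2 * n₁ ^ 2) using 1
    · funext n₂; ring
    · ring
  · convert hasSum_quadratic_mul_poissonWeight a ((p - 1) ^ 2) (2 * p * (p - 1) * b + p)
      (p ^ 2 * (b + b ^ 2) + p * b) using 1
    · funext n₁; ring
    · ring

end Mixture

structure PoissonTestModel {Ω : Type*} [MeasurableSpace Ω] (μ : Measure Ω) (π₁ π₂ Y : Ω → ℕ)
    (a b p : ℝ) : Prop where
  measure_fst_eq : ∀ k : ℕ, μ {ω | π₁ ω = k} = ENNReal.ofReal (poissonWeight a k)
  measure_snd_eq : ∀ k : ℕ, μ {ω | π₂ ω = k} = ENNReal.ofReal (poissonWeight b k)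
  indepFun : IndepFun π₁ π₂ μ
  measure_inter_eq : ∀ n₁ n₂ k : ℕ,
    μ ({ω | Y ω = k} ∩ {ω | π₁ ω = n₁} ∩ {ω | π₂ ω = n₂}) =
      ENNReal.ofReal (poissonWeight (((n₁ + n₂ : ℕ) : ℝ) * p) k) *
        μ ({ω | π₁ ω = n₁} ∩ {ω | π₂ ω = n₂})

namespace PoissonTestModel

variable {Ω : Type*} [MeasurableSpace Ω] {μ : Measure Ω} {π₁ π₂ Y : Ω → ℕ} {a b p : ℝ}

lemma measure_preimage_singleton (h : PoissonTestModel μ π₁ π₂ Y a b p) (ha : 0 ≤ a)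
    (hb : 0 ≤ b) (i : ℕ × ℕ × ℕ) :
    μ ((fun ω => (π₁ ω, π₂ ω, Y ω)) ⁻¹' {i}) = ENNReal.ofReal (mixtureWeight a b p i) := by
  obtain ⟨n₁, n₂, k⟩ := i
  have hcell : (fun ω => (π₁ ω, π₂ ω, Y ω)) ⁻¹' {(n₁, n₂, k)} =
      {ω | Y ω = k} ∩ {ω | π₁ ω = n₁} ∩ {ω | π₂ ω = n₂} := by
    ext ω
    simp only [Set.mem_preimage, Set.mem_singleton_iff, Prod.mk.injEq, Set.mem_inter_iff,
      Set.mem_ofPred_eq]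
    tauto
  have hπ : μ ({ω | π₁ ω = n₁} ∩ {ω | π₂ ω = n₂}) =
      ENNReal.ofReal (poissonWeight a n₁ * poissonWeight b n₂) := by
    rw [ENNReal.ofReal_mul (poissonWeight_nonneg ha _), ← h.measure_fst_eq, ← h.measure_snd_eq]
    exact h.indepFun.measure_inter_preimage_eq_mul _ _ (measurableSet_singleton n₁)
      (measurableSet_singleton n₂)
  rw [hcell, h.measure_inter_eq, hπ, ← ENNReal.ofReal_mul' (by
    exact mul_nonneg (poissonWeight_nonneg ha _) (poissonWeight_nonneg hb _)), mixtureWeight,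
    mul_comm]

lemma hasSum_integral [IsProbabilityMeasure μ] (h : PoissonTestModel μ π₁ π₂ Y a b p)
    (ha : 0 ≤ a) (hb : 0 ≤ b) (hp : 0 ≤ p) {f : ℕ × ℕ × ℕ → ℝ}
    (hf : Integrable (fun ω => f (π₁ ω, π₂ ω, Y ω)) μ) :
    HasSum (fun i => f i * mixtureWeight a b p i) (∫ ω, f (π₁ ω, π₂ ω, Y ω) ∂μ) := by
  set T : Ω → ℕ × ℕ × ℕ := fun ω => (π₁ ω, π₂ ω, Y ω)
  have hcell := h.measure_preimage_singleton ha hb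
  have hw := hasSum_mixtureWeight ha hb hp
  have hsum : ∑' i, μ (T ⁻¹' {i}) = μ Set.univ := by
    rw [tsum_congr hcell, ← ENNReal.ofReal_tsum_of_nonneg (mixtureWeight_nonneg ha hb hp)
      hw.summable, hw.tsum_eq, ENNReal.ofReal_one, measure_univ]
  refine (hasSum_integral_of_partition (fun i j hij => (Set.disjoint_singleton.2 hij).preimage T)
    (Set.eq_univ_of_forall fun ω => Set.mem_iUnion.2 ⟨T ω, rfl⟩) hsum
    (fun i ω hω => congrArg f hω) hf).congr_fun fun i => ?_
  rw [measureReal_def, hcell, ENNReal.toReal_ofReal (mixtureWeight_nonneg ha hb hp i)]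

end PoissonTestModel

/-- Let π₁, π₂ be independent Poisson with means m₁U₁, m₂U₂, p = U₁/(U₁+U₂), and conditional
on (π₁,π₂) let Y ~ Poisson((π₁+π₂)p). Then X₂ = Y − π₁ satisfies
Var(X₂) = [m₁U₁(U₁U + U₂²) + m₂U₁U₂(2U₁+U₂)]/U², where U = U₁+U₂. -/
theorem poisson_test_statistic_variance {Ω : Type*} [MeasurableSpace Ω] (μ : Measure Ω)
    [IsProbabilityMeasure μ] (π₁ π₂ Y : Ω → ℕ) (m₁ m₂ U₁ U₂ : ℝ)
    (hm₁ : 0 < m₁) (hm₂ : 0 < m₂) (hU₁ : 0 < U₁) (hU₂ : 0 < U₂)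
    (hπ₁ : ∀ k : ℕ, μ {ω | π₁ ω = k} =
      ENNReal.ofReal (Real.exp (-(m₁ * U₁)) * (m₁ * U₁) ^ k / (Nat.factorial k)))
    (hπ₂ : ∀ k : ℕ, μ {ω | π₂ ω = k} =
      ENNReal.ofReal (Real.exp (-(m₂ * U₂)) * (m₂ * U₂) ^ k / (Nat.factorial k)))
    (hindep : IndepFun π₁ π₂ μ)
    (hY : ∀ n₁ n₂ k : ℕ,
      μ ({ω | Y ω = k} ∩ {ω | π₁ ω = n₁} ∩ {ω | π₂ ω = n₂}) =
        ENNReal.ofReal (Real.exp (-(((n₁ + n₂ : ℕ) : ℝ) * (U₁ / (U₁ + U₂)))) *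
            (((n₁ + n₂ : ℕ) : ℝ) * (U₁ / (U₁ + U₂))) ^ k / (Nat.factorial k)) *
          μ ({ω | π₁ ω = n₁} ∩ {ω | π₂ ω = n₂}))
    (hint : MeasureTheory.MemLp (fun ω => (Y ω : ℝ) - (π₁ ω : ℝ)) 2 μ) :
    variance (fun ω => (Y ω : ℝ) - (π₁ ω : ℝ)) μ =
      (m₁ * U₁ * (U₁ * (U₁ + U₂) + U₂ ^ 2) + m₂ * U₁ * U₂ * (2 * U₁ + U₂)) /
        (U₁ + U₂) ^ 2 := by
  have hmodel : PoissonTestModel μ π₁ π₂ Y (m₁ * U₁) (m₂ * U₂) (U₁ / (U₁ + U₂)) :=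
    ⟨hπ₁, hπ₂, hindep, hY⟩
  have ha : 0 ≤ m₁ * U₁ := by positivity
  have hb : 0 ≤ m₂ * U₂ := by positivity
  have hp : 0 ≤ U₁ / (U₁ + U₂) := by positivity
  have hmean := hmodel.hasSum_integral ha hb hp (f := fun i => (i.2.2 : ℝ) - i.1)
    (hint.integrable one_le_two)
  have hsq := hmodel.hasSum_integral ha hb hp (f := fun i => ((i.2.2 : ℝ) - i.1) ^ 2)
    hint.integrable_sq
  rw [variance_eq_sub hint, Pi.pow_def,
    ← (hasSum_sub_mul_mixtureWeight hmean.summable).unique hmean,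
    ← (hasSum_sub_sq_mul_mixtureWeight hsq.summable).unique hsq]
  field_simp
  ring
end

section
/- In the equal-interval case U₁ = U₂ = NL with m₂ = qm₁, the solution of the normal-approximation equation for the Poisson parametric test yields N = (3 z_δ²/(m₁L)) · (1+q)/(1−q)², which exceeds the non-parametric requirement (2 z_δ²/(m₁L)) · (1+q)/(1−q)² by a factor 3/2. -/
/-!
With equal intervals `U₁ = U₂ = U` the mean of `X₂` is `U (m₂ - m₁) / 2` and its variance
collapses to `3 U (m₁ + m₂) / 4`, so squaring the normal-approximation equation gives the linear
equation `U (m₂ - m₁)² = 3 z² (m₁ + m₂)` for `U`.  Substituting `U = NL`, `m₂ = q m₁` yields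
`N = 3 z² (1 + q) / (m₁ L (1 - q)²)`, and the non-parametric variance `U (m₁ + m₂) / 2` gives `2`
in place of `3`.
-/

namespace PoissonTwoSample

noncomputable def meanX₂ (U₁ U₂ m₁ m₂ : ℝ) : ℝ :=
  U₁ * U₂ / (U₁ + U₂) * (m₂ - m₁)

noncomputable def varX₂ (U₁ U₂ m₁ m₂ : ℝ) : ℝ :=
  (m₁ * U₁ * (U₁ * (U₁ + U₂) + U₂ ^ 2) + m₂ * U₁ * U₂ * (2 * U₁ + U₂)) / (U₁ + U₂) ^ 2

lemma meanX₂_self {U : ℝ} (hU : U ≠ 0) (m₁ m₂ : ℝ) : meanX₂ U U m₁ m₂ = U * (m₂ - m₁) / 2 := by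
  unfold meanX₂
  field_simp
  ring

lemma varX₂_self {U : ℝ} (hU : U ≠ 0) (m₁ m₂ : ℝ) :
    varX₂ U U m₁ m₂ = 3 * U * (m₁ + m₂) / 4 := by
  unfold varX₂
  field_simp
  ring

lemma sq_eq_mul_of_div_sqrt_eq {a v z : ℝ} (hv : 0 < v) (h : a / √v = z) : a ^ 2 = z ^ 2 * v := by
  rw [div_eq_iff (Real.sqrt_pos.mpr hv).ne'] at h
  rw [h, mul_pow, Real.sq_sqrt hv.le]

theorem eq_of_meanX₂_div_sqrt_varX₂_self {U m₁ m₂ z : ℝ} (hU : 0 < U) (hm : 0 < m₁ + m₂)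
    (hne : m₁ ≠ m₂) (h : meanX₂ U U m₁ m₂ / √(varX₂ U U m₁ m₂) = z) :
    U = 3 * z ^ 2 * (m₁ + m₂) / (m₂ - m₁) ^ 2 := by
  rw [meanX₂_self hU.ne', varX₂_self hU.ne'] at h
  have hsq := sq_eq_mul_of_div_sqrt_eq (by positivity) h
  have hd : (m₂ - m₁) ^ 2 ≠ 0 := pow_ne_zero 2 (sub_ne_zero.mpr hne.symm)
  rw [eq_div_iff hd]
  have : U * (U * (m₂ - m₁) ^ 2 - 3 * z ^ 2 * (m₁ + m₂)) = 0 := by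
    linear_combination 4 * hsq
  linear_combination (mul_eq_zero.mp this).resolve_left hU.ne'

end PoissonTwoSample

open PoissonTwoSample in
theorem required_centres_parametric_general (m₁ L q z N : ℝ) (hm₁ : 0 < m₁) (hL : 0 < L)
    (hq : q ∈ Set.Ioo (0:ℝ) 1) (hN : 0 < N)
    (heq : ((N * L) * (N * L) / (N * L + N * L)) * (q * m₁ - m₁) /
        Real.sqrt ((m₁ * (N * L) * ((N * L) * (N * L + N * L) + (N * L) ^ 2) +
            (q * m₁) * (N * L) * (N * L) * (2 * (N * L) + N * L)) /
          (N * L + N * L) ^ 2) = z) :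
    N = 3 * z ^ 2 / (m₁ * L) * (1 + q) / (1 - q) ^ 2 ∧
    N = (3 / 2) * (2 * z ^ 2 / (m₁ * L) * (1 + q) / (1 - q) ^ 2) := by
  obtain ⟨hq0, hq1⟩ := hq
  have hNL := eq_of_meanX₂_div_sqrt_varX₂_self (m₂ := q * m₁) (mul_pos hN hL)
    (by positivity) (by nlinarith) heq
  have hq1' : 1 - q ≠ 0 := by linarith
  rw [show (q * m₁ - m₁) ^ 2 = m₁ ^ 2 * (1 - q) ^ 2 by ring, ← eq_div_iff hL.ne'] at hNL
  constructor <;> rw [hNL] <;> field_simp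

/-- In the equal-interval case U₁ = U₂ = NL with m₂ = qm₁, the solution of the
normal-approximation equation for the Poisson parametric test yields
N = (3 z_δ²/(m₁L)) · (1+q)/(1−q)², which exceeds the non-parametric requirement
(2 z_δ²/(m₁L)) · (1+q)/(1−q)² by a factor 3/2.
The equation is E[X₂]/√Var(X₂) = z_δ with U₁ = U₂ = NL and m₂ = qm₁, where
E[X₂] = U₁U₂/(U₁+U₂)(m₂−m₁) and
Var(X₂) = [m₁U₁(U₁(U₁+U₂)+U₂²) + m₂U₁U₂(2U₁+U₂)]/(U₁+U₂)². -/
theorem required_centres_parametric (m₁ L q z N : ℝ) (hm₁ : 0 < m₁) (hL : 0 < L)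
    (hq : q ∈ Set.Ioo (0:ℝ) 1) (hz : z < 0) (hN : 0 < N)
    (heq : ((N * L) * (N * L) / (N * L + N * L)) * (q * m₁ - m₁) /
        Real.sqrt ((m₁ * (N * L) * ((N * L) * (N * L + N * L) + (N * L) ^ 2) +
            (q * m₁) * (N * L) * (N * L) * (2 * (N * L) + N * L)) /
          (N * L + N * L) ^ 2) = z) :
    N = 3 * z ^ 2 / (m₁ * L) * (1 + q) / (1 - q) ^ 2 ∧
    N = (3 / 2) * (2 * z ^ 2 / (m₁ * L) * (1 + q) / (1 - q) ^ 2) :=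
  required_centres_parametric_general m₁ L q z N hm₁ hL hq hN heq
end
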